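/- Subject head of the ICL construction (β→∞ limit): Consider the subject head with weights W_KQ^subj = β(Σ_{j=1}^M E(s_j) + E(p_{-1}))E([sep])^T and W_OV^subj = -Σ_j (Σ_{u∈U, u∉A_j} E(u)) E(s_j)^T. For every ICL sequence X with query subject s_{j_m} (which occupies the position with relative positional encoding p_{-1}), as β→∞ the attention at the last position concentrates entirely on the query subject, so that lim_{β→∞} g_subj(X) = E(s_{j_m}) and lim_{β→∞} W_OV^subj g_subj(X) = -(Σ_{u∈U} E(u) - Σ_{l=1}^L E(a_{j_m}^l)). -/

import Mathlib

/-
At the last position the query token is `[sep]`, so with `W_KQ^subj` the score of row `j` is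
`1` if `j` holds a subject token plus `1` if `j` carries the positional encoding `p₋₁`. The query
subject, two positions before the end, is the only row scoring `2`; hence the softmax at
inverse temperature `β` concentrates on it as `β → ∞`. The value matrix `W_OV^subj` sends
`E(s_j)` to minus the sum of the attribute embeddings that `s_j` does not carry.
-/

open Filter Topology Finset Matrix

namespace CR

/-- Vocabulary tokens: `M` subjects, `L` attribute types each with `U` values,
`G` grammar tokens, `L` relation tokens, and a separator. -/
inductive Tok (M L U G : ℕ) : Type where
  | subj : Fin M → Tok M L U G
  | attr : Fin L → Fin U → Tok M L U G
  | gram : Fin G → Tok M L U G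
  | rel  : Fin L → Tok M L U G
  | sep  : Tok M L U G
deriving DecidableEq, Fintype

/-- Embedding dimension: one coordinate per vocabulary token plus `P` positional coordinates. -/
abbrev Dim (M L U G P : ℕ) := Tok M L U G ⊕ Fin P

abbrev Vec (M L U G P : ℕ) := Dim M L U G P → ℝ

variable {M L U G P : ℕ}

/-- One-hot token embedding `E(v)`. -/
def E (v : Tok M L U G) : Vec M L U G P :=
  fun i => if i = Sum.inl v then 1 else 0

/-- One-hot positional encoding for relative position `-k`
(`pos 0 = E(p₀)`, `pos 1 = E(p₋₁)`, ...); zero if `k ≥ P`. -/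
def pos (k : ℕ) : Vec M L U G P :=
  fun i => match i with
  | Sum.inl _ => 0
  | Sum.inr j => if (j : ℕ) = k then 1 else 0

/-- Softmax attention weight of (0-indexed) row `j` among rows `0,…,t-1`, with query row `t-1`;
row `i` carries the relative positional encoding `p_{-(t-1-i)}`. -/
noncomputable def attn (W : Matrix (Dim M L U G P) (Dim M L U G P) ℝ)
    (X : ℕ → Vec M L U G P) (t j : ℕ) : ℝ :=
  Real.exp ((X j + pos (t - 1 - j)) ⬝ᵥ W.mulVec (X (t - 1))) /
    ∑ i ∈ Finset.range t, Real.exp ((X i + pos (t - 1 - i)) ⬝ᵥ W.mulVec (X (t - 1)))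

/-- Attention-head output `g_h^t(X)` (attention over the first `t` rows, query at row `t-1`). -/
noncomputable def gHead (W : Matrix (Dim M L U G P) (Dim M L U G P) ℝ)
    (X : ℕ → Vec M L U G P) (t : ℕ) : Vec M L U G P :=
  ∑ j ∈ Finset.range t, attn W X t j • X j

/-- Token at (0-indexed) position `t` of a PT sequence with subject `jstar`:
block `k` occupies positions `k(S+3),…,k(S+3)+S+1` (subject, `S` middle tokens, separator),
followed (except after the last block) by the attribute `a_{jstar}^{ltype k}`. -/
def ptTok (S : ℕ) (jstar : Fin M) (ltype : ℕ → Fin L)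
    (mid : ℕ → ℕ → Tok M L U G) (a : Fin M → Fin L → Fin U) (t : ℕ) : Tok M L U G :=
  let k := t / (S + 3)
  let r := t % (S + 3)
  if r = 0 then Tok.subj jstar
  else if r ≤ S then mid k (r - 1)
  else if r = S + 1 then Tok.sep
  else Tok.attr (ltype k) (a jstar (ltype k))

/-- Token at (0-indexed) position `t` of an ICL sequence with shared attribute type `lstar`
and subjects `js 0, js 1, …`: the pattern is subject, separator, attribute, subject, … -/
def iclTok (a : Fin M → Fin L → Fin U) (js : ℕ → Fin M) (lstar : Fin L) (t : ℕ) :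
    Tok M L U G :=
  if t % 3 = 0 then Tok.subj (js (t / 3))
  else if t % 3 = 1 then Tok.sep
  else Tok.attr lstar (a (js (t / 3)) lstar)

theorem tendsto_exp_mul_div_sum_exp_atTop {ι : Type*} [DecidableEq ι] {s : Finset ι}
    {c : ι → ℝ} {i₀ : ι} (hi₀ : i₀ ∈ s) (hmax : ∀ i ∈ s, i ≠ i₀ → c i < c i₀)
    {j : ι} (hj : j ∈ s) :
    Tendsto (fun β : ℝ => Real.exp (β * c j) / ∑ i ∈ s, Real.exp (β * c i)) atTop
      (𝓝 (if j = i₀ then 1 else 0)) := by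
  have hshift : ∀ i ∈ s, Tendsto (fun β : ℝ => Real.exp (β * (c i - c i₀))) atTop
      (𝓝 (if i = i₀ then 1 else 0)) := by
    intro i hi
    by_cases h : i = i₀
    · simp [h]
    · rw [if_neg h]
      exact Real.tendsto_exp_atBot.comp <|
        tendsto_id.atTop_mul_const_of_neg (sub_neg.mpr (hmax i hi h))
  have hden : Tendsto (fun β : ℝ => ∑ i ∈ s, Real.exp (β * (c i - c i₀))) atTop (𝓝 1) := by
    simpa [Finset.sum_ite_eq', hi₀] using tendsto_finsetSum s hshift
  have hrescale : ∀ β : ℝ, Real.exp (β * c j) / ∑ i ∈ s, Real.exp (β * c i)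
      = Real.exp (β * (c j - c i₀)) / ∑ i ∈ s, Real.exp (β * (c i - c i₀)) := by
    intro β
    simp only [mul_sub, Real.exp_sub, ← Finset.sum_div]
    exact (div_div_div_cancel_right₀ (Real.exp_ne_zero _) _ _).symm
  rw [funext hrescale, ← div_one (if j = i₀ then (1 : ℝ) else 0)]
  exact (hshift j hj).div hden one_ne_zero

theorem tendsto_sum_softmax_smul_atTop {ι V : Type*} [DecidableEq ι] [AddCommMonoid V]
    [TopologicalSpace V] [ContinuousAdd V] [Module ℝ V] [ContinuousSMul ℝ V]
    {s : Finset ι} {c : ι → ℝ} {i₀ : ι} (hi₀ : i₀ ∈ s)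
    (hmax : ∀ i ∈ s, i ≠ i₀ → c i < c i₀) (v : ι → V) :
    Tendsto (fun β : ℝ =>
        ∑ j ∈ s, (Real.exp (β * c j) / ∑ i ∈ s, Real.exp (β * c i)) • v j) atTop
      (𝓝 (v i₀)) := by
  have hlim := tendsto_finsetSum s fun j hj =>
    (tendsto_exp_mul_div_sum_exp_atTop hi₀ hmax hj).smul_const (v j)
  simpa [ite_smul, Finset.sum_ite_eq', hi₀] using hlim

def attnScore (W : Matrix (Dim M L U G P) (Dim M L U G P) ℝ) (X : ℕ → Vec M L U G P)
    (t j : ℕ) : ℝ :=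
  (X j + pos (t - 1 - j)) ⬝ᵥ W *ᵥ X (t - 1)

theorem attn_smul (β : ℝ) (W : Matrix (Dim M L U G P) (Dim M L U G P) ℝ)
    (X : ℕ → Vec M L U G P) (t j : ℕ) :
    attn (β • W) X t j = Real.exp (β * attnScore W X t j) /
      ∑ i ∈ range t, Real.exp (β * attnScore W X t i) := by
  simp only [attn, attnScore, smul_mulVec, dotProduct_smul, smul_eq_mul]

theorem tendsto_gHead_smul_atTop {W : Matrix (Dim M L U G P) (Dim M L U G P) ℝ}
    {X : ℕ → Vec M L U G P} {t j₀ : ℕ} (hj₀ : j₀ < t)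
    (hmax : ∀ i < t, i ≠ j₀ → attnScore W X t i < attnScore W X t j₀) :
    Tendsto (fun β : ℝ => gHead (β • W) X t) atTop (𝓝 (X j₀)) := by
  simp only [gHead, attn_smul]
  exact tendsto_sum_softmax_smul_atTop (mem_range.2 hj₀) (fun i hi => hmax i (mem_range.1 hi)) X

theorem E_eq_single (v : Tok M L U G) : (E v : Vec M L U G P) = Pi.single (Sum.inl v) 1 := by
  ext i
  simp [E, Pi.single_apply]

theorem E_dotProduct (v : Tok M L U G) (y : Vec M L U G P) : E v ⬝ᵥ y = y (Sum.inl v) := by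
  rw [E_eq_single, single_dotProduct, one_mul]

theorem pos_eq_single {k : ℕ} (hk : k < P) :
    (pos k : Vec M L U G P) = Pi.single (Sum.inr ⟨k, hk⟩) 1 := by
  ext (i | i) <;> simp [pos, Pi.single_apply, Fin.ext_iff]

theorem pos_dotProduct {k : ℕ} (hk : k < P) (y : Vec M L U G P) :
    pos k ⬝ᵥ y = y (Sum.inr ⟨k, hk⟩) := by
  rw [pos_eq_single hk, single_dotProduct, one_mul]

/-- The key-query matrix `W_KQ^subj` of the subject head with `β = 1`. -/
def subjectKQ : Matrix (Dim M L U G P) (Dim M L U G P) ℝ :=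
  vecMulVec (∑ i : Fin M, E (Tok.subj i) + pos 1) (E Tok.sep)

section ICL

variable (a : Fin M → Fin L → Fin U) (js : ℕ → Fin M) (lstar : Fin L)

theorem iclTok_three_mul (n : ℕ) :
    (iclTok a js lstar (3 * n) : Tok M L U G) = Tok.subj (js n) := by
  simp [iclTok]

theorem iclTok_of_mod_three_eq_one {t : ℕ} (ht : t % 3 = 1) :
    (iclTok a js lstar t : Tok M L U G) = Tok.sep := by
  simp [iclTok, ht]

theorem E_iclTok_add_pos_dotProduct {k : ℕ} (hk : k < P) (t : ℕ) :
    (E (iclTok a js lstar t) + pos k : Vec M L U G P) ⬝ᵥ (∑ j : Fin M, E (Tok.subj j) + pos 1)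
      = (if t % 3 = 0 then 1 else 0) + (if k = 1 then 1 else 0) := by
  rw [add_dotProduct, E_dotProduct, pos_dotProduct hk]
  unfold iclTok
  split_ifs <;> simp [E, pos, Finset.sum_apply, *]

theorem attnScore_subjectKQ {T j : ℕ} (hT : T % 3 = 2) (hP : T ≤ P) (hj : j < T) :
    attnScore subjectKQ (fun t => (E (iclTok a js lstar t) : Vec M L U G P)) T j
      = (if j % 3 = 0 then 1 else 0) + (if T - 1 - j = 1 then 1 else 0) := by
  have hquery : (E Tok.sep : Vec M L U G P) ⬝ᵥ E (iclTok a js lstar (T - 1)) = 1 := by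
    rw [iclTok_of_mod_three_eq_one a js lstar (by omega), E_dotProduct]
    simp [E]
  rw [attnScore, subjectKQ, vecMulVec_mulVec, hquery, op_smul_eq_smul, one_smul,
    E_iclTok_add_pos_dotProduct a js lstar (by omega)]

theorem attnScore_subjectKQ_lt {N T i : ℕ} (hT : T = 3 * N + 2) (hP : T ≤ P) (hi : i < T)
    (hne : i ≠ 3 * N) :
    attnScore subjectKQ (fun t => (E (iclTok a js lstar t) : Vec M L U G P)) T i
      < attnScore subjectKQ (fun t => (E (iclTok a js lstar t) : Vec M L U G P)) T (3 * N) := by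
  rw [attnScore_subjectKQ a js lstar (by omega) hP hi,
    attnScore_subjectKQ a js lstar (by omega) hP (by omega)]
  have hi' : T - 1 - i ≠ 1 := by omega
  have hN : T - 1 - 3 * N = 1 := by omega
  simp only [hi', hN, Nat.mul_mod_right, if_true, if_false]
  split_ifs <;> norm_num

end ICL

theorem neg_sum_vecMulVec_mulVec_E_subj (w : Fin M → Vec M L U G P) (j : Fin M) :
    (-∑ i : Fin M, vecMulVec (w i) (E (Tok.subj i))) *ᵥ (E (Tok.subj j) : Vec M L U G P)
      = -w j := by
  simp [neg_mulVec, sum_mulVec, vecMulVec_mulVec, E_dotProduct, E]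

theorem sum_sum_erase_E_attr (b : Fin L → Fin U) :
    ∑ l : Fin L, ∑ u ∈ univ.erase (b l), (E (Tok.attr l u) : Vec M L U G P)
      = ∑ l : Fin L, ∑ u : Fin U, E (Tok.attr l u) - ∑ l : Fin L, E (Tok.attr l (b l)) := by
  simp only [sum_erase_eq_sub (mem_univ _), sum_sub_distrib]

/-- Subject head of the ICL construction (β→∞ limit). -/
theorem subject_head_ICL_limit
    (M L U G P N : ℕ) (T : ℕ) (hT : T = 3 * (N + 1) - 1) (hP : T ≤ P)
    (a : Fin M → Fin L → Fin U) (lstar : Fin L) (js : ℕ → Fin M)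
    (X : ℕ → Vec M L U G P) (hX : ∀ t, X t = E (iclTok a js lstar t))
    (WKQ0 WOV : Matrix (Dim M L U G P) (Dim M L U G P) ℝ)
    (hKQ : WKQ0 = Matrix.vecMulVec
      ((∑ j : Fin M, E (Tok.subj j)) + pos 1) (E Tok.sep))
    (hOV : WOV = -(∑ j : Fin M, Matrix.vecMulVec
      (∑ l : Fin L, ∑ u ∈ Finset.univ.erase (a j l), E (Tok.attr l u))
      (E (Tok.subj j)))) :
    Filter.Tendsto (fun β : ℝ => gHead (β • WKQ0) X T) Filter.atTop
      (𝓝 (E (Tok.subj (js N)))) ∧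
    Filter.Tendsto (fun β : ℝ => WOV.mulVec (gHead (β • WKQ0) X T)) Filter.atTop
      (𝓝 (-((∑ l : Fin L, ∑ u : Fin U, E (Tok.attr l u))
            - ∑ l : Fin L, E (Tok.attr l (a (js N) l))))) := by
  replace hT : T = 3 * N + 2 := by omega
  have hhead : Tendsto (fun β : ℝ => gHead (β • WKQ0) X T) atTop (𝓝 (E (Tok.subj (js N)))) := by
    rw [hKQ, funext hX, ← iclTok_three_mul a js lstar N]
    exact tendsto_gHead_smul_atTop (by omega) fun i hi hne =>
      attnScore_subjectKQ_lt a js lstar hT hP hi hne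
  refine ⟨hhead, ?_⟩
  have hvalue : WOV *ᵥ E (Tok.subj (js N)) = -((∑ l : Fin L, ∑ u : Fin U, E (Tok.attr l u))
      - ∑ l : Fin L, E (Tok.attr l (a (js N) l))) := by
    rw [hOV, neg_sum_vecMulVec_mulVec_E_subj, sum_sum_erase_E_attr]
  have hOVcont : Continuous (WOV *ᵥ ·) := continuous_const.matrix_mulVec continuous_id
  exact hvalue ▸ (hOVcont.tendsto _).comp hhead

end CR
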